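/- arXiv:q-alg/9501030 — 3 statements merged into one kernel-verified Lean document; each statement's English description precedes it below -/
import Mathlib

section
/- For the 4×4 matrix representation of g_μ, the element r = J ⊗ P₁ - P₁ ⊗ J + D ⊗ P₂ - P₂ ⊗ D (in the tensor square of the matrix algebra) satisfies the classical Yang–Baxter equation [r₁₂, r₁₃] + [r₁₂, r₂₃] + [r₁₃, r₂₃] = 0. -/
open Matrix Kronecker

def ybJ (μ : ℝ) : Matrix (Fin 4) (Fin 4) ℝ :=
  !![0, -μ, 0, 0; -1, 0, 0, 0; 0, 0, 0, 0; 0, 0, 0, 0]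

def ybP1 : Matrix (Fin 4) (Fin 4) ℝ :=
  !![0, 0, 0, 0; 0, 0, 0, 0; 0, 1, 0, 0; 0, 1, 0, 0]

def ybP2 : Matrix (Fin 4) (Fin 4) ℝ :=
  !![0, 0, 0, 0; 0, 0, 0, 0; 1, 0, 0, 0; 1, 0, 0, 0]

def ybD : Matrix (Fin 4) (Fin 4) ℝ :=
  !![0, 0, 0, 0; 0, 0, 0, 0; 0, 0, 0, 1; 0, 0, 1, 0]

/-- r₁₂ for r = J⊗P₁ - P₁⊗J + D⊗P₂ - P₂⊗D, realized by Kronecker products. -/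
noncomputable def ybR12 (μ : ℝ) : Matrix ((Fin 4 × Fin 4) × Fin 4) ((Fin 4 × Fin 4) × Fin 4) ℝ :=
  ybJ μ ⊗ₖ ybP1 ⊗ₖ (1 : Matrix (Fin 4) (Fin 4) ℝ)
    - ybP1 ⊗ₖ ybJ μ ⊗ₖ (1 : Matrix (Fin 4) (Fin 4) ℝ)
    + ybD ⊗ₖ ybP2 ⊗ₖ (1 : Matrix (Fin 4) (Fin 4) ℝ)
    - ybP2 ⊗ₖ ybD ⊗ₖ (1 : Matrix (Fin 4) (Fin 4) ℝ)

/-- r₁₃. -/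
noncomputable def ybR13 (μ : ℝ) : Matrix ((Fin 4 × Fin 4) × Fin 4) ((Fin 4 × Fin 4) × Fin 4) ℝ :=
  ybJ μ ⊗ₖ (1 : Matrix (Fin 4) (Fin 4) ℝ) ⊗ₖ ybP1
    - ybP1 ⊗ₖ (1 : Matrix (Fin 4) (Fin 4) ℝ) ⊗ₖ ybJ μ
    + ybD ⊗ₖ (1 : Matrix (Fin 4) (Fin 4) ℝ) ⊗ₖ ybP2
    - ybP2 ⊗ₖ (1 : Matrix (Fin 4) (Fin 4) ℝ) ⊗ₖ ybD

/-- r₂₃. -/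
noncomputable def ybR23 (μ : ℝ) : Matrix ((Fin 4 × Fin 4) × Fin 4) ((Fin 4 × Fin 4) × Fin 4) ℝ :=
  (1 : Matrix (Fin 4) (Fin 4) ℝ) ⊗ₖ ybJ μ ⊗ₖ ybP1
    - (1 : Matrix (Fin 4) (Fin 4) ℝ) ⊗ₖ ybP1 ⊗ₖ ybJ μ
    + (1 : Matrix (Fin 4) (Fin 4) ℝ) ⊗ₖ ybD ⊗ₖ ybP2
    - (1 : Matrix (Fin 4) (Fin 4) ℝ) ⊗ₖ ybP2 ⊗ₖ ybD

/-!
Products of J, P₁, P₂, D close up in a small table: apart from J² and D², the only nonzero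
ones are P₁J = -P₂, P₂J = -μP₁, DP₁ = P₁ and DP₂ = P₂. Expanding the commutators by
(a ⊗ b ⊗ c)(a' ⊗ b' ⊗ c') = aa' ⊗ bb' ⊗ cc' and reducing with this table leaves a linear
combination of Kronecker triples that cancels term by term; the unreduced squares J² and D²
only occur in pairs of equal terms inside a single commutator.
-/

namespace Matrix

variable {α l m n p : Type*}

theorem neg_kronecker [Mul α] [HasDistribNeg α] (A : Matrix l m α) (B : Matrix n p α) :
    (-A) ⊗ₖ B = -(A ⊗ₖ B) := by
  ext; simp

theorem kronecker_neg [Mul α] [HasDistribNeg α] (A : Matrix l m α) (B : Matrix n p α) :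
    A ⊗ₖ (-B) = -(A ⊗ₖ B) := by
  ext; simp

end Matrix

section MultiplicationTable

variable (μ : ℝ)

-- `← zero_empty` lets `simp` identify the computed zero rows `![0, 0, 0, 0]` with `0`.
theorem ybJ_mul_ybP1 : ybJ μ * ybP1 = 0 := by simp [ybJ, ybP1, ← zero_empty]
theorem ybJ_mul_ybP2 : ybJ μ * ybP2 = 0 := by simp [ybJ, ybP2, ← zero_empty]
theorem ybJ_mul_ybD : ybJ μ * ybD = 0 := by simp [ybJ, ybD, ← zero_empty]
theorem ybD_mul_ybJ : ybD * ybJ μ = 0 := by simp [ybD, ybJ, ← zero_empty]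
theorem ybP1_mul_ybJ : ybP1 * ybJ μ = -ybP2 := by simp [ybP1, ybJ, ybP2, ← zero_empty]
theorem ybP2_mul_ybJ : ybP2 * ybJ μ = -μ • ybP1 := by simp [ybP2, ybJ, ybP1, ← zero_empty]
theorem ybP1_mul_ybP1 : ybP1 * ybP1 = 0 := by simp [ybP1, ← zero_empty]
theorem ybP1_mul_ybP2 : ybP1 * ybP2 = 0 := by simp [ybP1, ybP2, ← zero_empty]
theorem ybP2_mul_ybP1 : ybP2 * ybP1 = 0 := by simp [ybP2, ybP1, ← zero_empty]
theorem ybP2_mul_ybP2 : ybP2 * ybP2 = 0 := by simp [ybP2, ← zero_empty]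
theorem ybP1_mul_ybD : ybP1 * ybD = 0 := by simp [ybP1, ybD, ← zero_empty]
theorem ybP2_mul_ybD : ybP2 * ybD = 0 := by simp [ybP2, ybD, ← zero_empty]
theorem ybD_mul_ybP1 : ybD * ybP1 = ybP1 := by simp [ybD, ybP1, ← zero_empty]
theorem ybD_mul_ybP2 : ybD * ybP2 = ybP2 := by simp [ybD, ybP2, ← zero_empty]

end MultiplicationTable

/-- The classical r-matrix r = J∧P₁ + D∧P₂ of the representation of g_μ satisfies
the classical Yang–Baxter equation [r₁₂,r₁₃] + [r₁₂,r₂₃] + [r₁₃,r₂₃] = 0. -/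
theorem classical_yang_baxter (μ : ℝ) :
    (ybR12 μ * ybR13 μ - ybR13 μ * ybR12 μ)
      + (ybR12 μ * ybR23 μ - ybR23 μ * ybR12 μ)
      + (ybR13 μ * ybR23 μ - ybR23 μ * ybR13 μ) = 0 := by
  simp only [ybR12, ybR13, ybR23, sub_mul, mul_sub, add_mul, mul_add,
    ← mul_kronecker_mul, one_mul, mul_one,
    ybJ_mul_ybP1, ybJ_mul_ybP2, ybJ_mul_ybD, ybD_mul_ybJ, ybP1_mul_ybJ, ybP2_mul_ybJ,
    ybP1_mul_ybP1, ybP1_mul_ybP2, ybP2_mul_ybP1, ybP2_mul_ybP2, ybP1_mul_ybD, ybP2_mul_ybD,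
    ybD_mul_ybP1, ybD_mul_ybP2,
    zero_kronecker, kronecker_zero, neg_kronecker, kronecker_neg, smul_kronecker, kronecker_smul]
  module
end

section
/- Let g = e^{c₁C₁} e^{c₂C₂} e^{p₁P₁} e^{p₂P₂} e^{dD} e^{θJ} as a product of matrix exponentials of the 4×4 representation matrices. Then g equals the explicit 4×4 matrix with block form: upper-left 2×2 block [[C_{-μ}(θ), -μS_{-μ}(θ)],[-S_{-μ}(θ), C_{-μ}(θ)]], lower-right 2×2 block [[cosh d, sinh d],[sinh d, cosh d]], upper-right 2×2 block zero, and lower-left entries t₃₁ = (p₂-c₂)C_{-μ}(θ) - (p₁-c₁)S_{-μ}(θ), t₃₂ = (p₁-c₁)C_{-μ}(θ) - μ(p₂-c₂)S_{-μ}(θ), t₄₁ = (p₂+c₂)C_{-μ}(θ) - (p₁+c₁)S_{-μ}(θ), t₄₂ = (p₁+c₁)C_{-μ}(θ) - μ(p₂+c₂)S_{-μ}(θ). -/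
/-!
Each of `C₁, C₂, P₁, P₂` squares to zero, so its one-parameter subgroup is `1 + t • X`.
`D` and `J` square to `s² • E`, where `E` is the identity of the 2×2 diagonal block they
live in (`s = 1` for `D`, `s = √μ` for `J`); splitting the exponential series into even and
odd powers then gives `exp (t • X) = 1 + (cosh (s t) - 1) • E + (sinh (s t) / s) • X`.
Multiplying the six closed forms out yields the matrix.
-/

open Matrix

def grpJ (μ : ℝ) : Matrix (Fin 4) (Fin 4) ℝ :=
  !![0, -μ, 0, 0; -1, 0, 0, 0; 0, 0, 0, 0; 0, 0, 0, 0]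

def grpP1 : Matrix (Fin 4) (Fin 4) ℝ :=
  !![0, 0, 0, 0; 0, 0, 0, 0; 0, 1, 0, 0; 0, 1, 0, 0]

def grpP2 : Matrix (Fin 4) (Fin 4) ℝ :=
  !![0, 0, 0, 0; 0, 0, 0, 0; 1, 0, 0, 0; 1, 0, 0, 0]

def grpD : Matrix (Fin 4) (Fin 4) ℝ :=
  !![0, 0, 0, 0; 0, 0, 0, 0; 0, 0, 0, 1; 0, 0, 1, 0]

def grpC1 : Matrix (Fin 4) (Fin 4) ℝ :=
  !![0, 0, 0, 0; 0, 0, 0, 0; 0, -1, 0, 0; 0, 1, 0, 0]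

def grpC2 : Matrix (Fin 4) (Fin 4) ℝ :=
  !![0, 0, 0, 0; 0, 0, 0, 0; -1, 0, 0, 0; 1, 0, 0, 0]

/-- C_{-μ}(θ) = cosh(√μ θ). -/
noncomputable def genC (μ θ : ℝ) : ℝ := Real.cosh (Real.sqrt μ * θ)

/-- S_{-μ}(θ) = sinh(√μ θ)/√μ. -/
noncomputable def genS (μ θ : ℝ) : ℝ := Real.sinh (Real.sqrt μ * θ) / Real.sqrt μ

open NormedSpace
open scoped Nat

section

variable {A : Type*} [Ring A] [Algebra ℝ A] [TopologicalSpace A] [IsTopologicalRing A]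

theorem exp_smul_of_mul_self_eq_zero {B : A} (hB : B * B = 0) (t : ℝ) :
    exp (t • B) = 1 + t • B := by
  have hsq : t • B * (t • B) = 0 := by rw [smul_mul_smul, hB, smul_zero]
  rw [exp_eq_tsum ℝ]
  beta_reduce
  rw [tsum_eq_sum (s := Finset.range 2)]
  · simp [Finset.sum_range_succ]
  · intro n hn
    obtain ⟨m, rfl⟩ := Nat.exists_eq_add_of_le (not_lt.mp (Finset.mem_range.not.mp hn))
    rw [pow_add, sq, hsq, zero_mul, smul_zero]

variable [T2Space A] [ContinuousSMul ℝ A]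

theorem exp_smul_of_mul_self_eq_smul {B E : A} {s : ℝ} (hs : s ≠ 0) (hB : B * B = s ^ 2 • E)
    (hEB : E * B = B) (t : ℝ) :
    exp (t • B) = 1 + (Real.cosh (s * t) - 1) • E + (Real.sinh (s * t) / s) • B := by
  have hsq : (t • B) ^ 2 = (s * t) ^ 2 • E := by
    rw [sq, smul_mul_smul, hB, smul_smul]
    ring_nf
  have hodd (k : ℕ) : (t • B) ^ (2 * k + 1) = ((s * t) ^ (2 * k + 1) / s) • B := by
    induction k with
    | zero => simp [hs]
    | succ k ih =>
      rw [show 2 * (k + 1) + 1 = 2 + (2 * k + 1) by ring, pow_add, hsq, ih, smul_mul_smul, hEB]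
      congr 1
      ring
  have heven (k : ℕ) : (t • B) ^ (2 * k + 2) = (s * t) ^ (2 * k + 2) • E := by
    rw [pow_succ, hodd, smul_mul_smul, hB, smul_smul]
    congr 1
    field_simp
    ring
  rw [exp_eq_tsum ℝ]
  refine HasSum.tsum_eq (HasSum.even_add_odd ?_ ?_)
  · have hcosh : HasSum (fun k ↦ (s * t) ^ (2 * (k + 1)) / (2 * (k + 1))!)
        (Real.cosh (s * t) - 1) := by
      simpa using (hasSum_nat_add_iff' 1).mpr (Real.hasSum_cosh (s * t))
    have hpos : HasSum (fun k ↦ ((2 * (k + 1))! ⁻¹ : ℝ) • (t • B) ^ (2 * (k + 1)))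
        ((Real.cosh (s * t) - 1) • E) := by
      convert hcosh.smul_const E using 2 with k
      rw [mul_add, mul_one, heven, smul_smul, div_eq_inv_mul]
    convert hpos.zero_add (f := fun k ↦ ((2 * k)! ⁻¹ : ℝ) • (t • B) ^ (2 * k)) using 1
    simp
  · convert ((Real.hasSum_sinh (s * t)).div_const s).smul_const B using 2 with k
    rw [hodd, smul_smul]
    ring_nf

end

theorem grpC1_mul_self : grpC1 * grpC1 = 0 := by
  ext i j; fin_cases i <;> fin_cases j <;> simp [grpC1, mul_apply, Fin.sum_univ_four]

theorem grpC2_mul_self : grpC2 * grpC2 = 0 := by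
  ext i j; fin_cases i <;> fin_cases j <;> simp [grpC2, mul_apply, Fin.sum_univ_four]

theorem grpP1_mul_self : grpP1 * grpP1 = 0 := by
  ext i j; fin_cases i <;> fin_cases j <;> simp [grpP1, mul_apply, Fin.sum_univ_four]

theorem grpP2_mul_self : grpP2 * grpP2 = 0 := by
  ext i j; fin_cases i <;> fin_cases j <;> simp [grpP2, mul_apply, Fin.sum_univ_four]

theorem grpD_mul_self : grpD * grpD = diagonal ![0, 0, 1, 1] := by
  ext i j; fin_cases i <;> fin_cases j <;> simp [grpD, mul_apply, Fin.sum_univ_four]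

theorem diagonal_mul_grpD : diagonal ![0, 0, 1, 1] * grpD = grpD := by
  ext i j; fin_cases i <;> fin_cases j <;> simp [grpD, mul_apply, Fin.sum_univ_four]

theorem grpJ_mul_self (μ : ℝ) : grpJ μ * grpJ μ = μ • diagonal ![1, 1, 0, 0] := by
  ext i j; fin_cases i <;> fin_cases j <;> simp [grpJ, mul_apply, Fin.sum_univ_four]

theorem diagonal_mul_grpJ (μ : ℝ) : diagonal ![1, 1, 0, 0] * grpJ μ = grpJ μ := by
  ext i j; fin_cases i <;> fin_cases j <;> simp [grpJ, mul_apply, Fin.sum_univ_four]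

/-- The group element g = e^{c₁C₁} e^{c₂C₂} e^{p₁P₁} e^{p₂P₂} e^{dD} e^{θJ}
of G_μ equals the explicit 4×4 matrix of the paper. -/
theorem group_element_matrix (μ θ d p₁ p₂ c₁ c₂ : ℝ) (hμ : 0 < μ) :
    NormedSpace.exp (c₁ • grpC1) * NormedSpace.exp (c₂ • grpC2) *
      NormedSpace.exp (p₁ • grpP1) * NormedSpace.exp (p₂ • grpP2) *
      NormedSpace.exp (d • grpD) * NormedSpace.exp (θ • grpJ μ)
    = !![genC μ θ, -μ * genS μ θ, 0, 0;
         -genS μ θ, genC μ θ, 0, 0;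
         (p₂ - c₂) * genC μ θ - (p₁ - c₁) * genS μ θ,
           (p₁ - c₁) * genC μ θ - μ * (p₂ - c₂) * genS μ θ,
           Real.cosh d, Real.sinh d;
         (p₂ + c₂) * genC μ θ - (p₁ + c₁) * genS μ θ,
           (p₁ + c₁) * genC μ θ - μ * (p₂ + c₂) * genS μ θ,
           Real.sinh d, Real.cosh d] := by
  have hD : grpD * grpD = (1 : ℝ) ^ 2 • diagonal ![0, 0, 1, 1] := by
    rw [one_pow, one_smul, grpD_mul_self]
  have hJ : grpJ μ * grpJ μ = Real.sqrt μ ^ 2 • diagonal ![1, 1, 0, 0] := by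
    rw [Real.sq_sqrt hμ.le, grpJ_mul_self]
  rw [exp_smul_of_mul_self_eq_zero grpC1_mul_self, exp_smul_of_mul_self_eq_zero grpC2_mul_self,
    exp_smul_of_mul_self_eq_zero grpP1_mul_self, exp_smul_of_mul_self_eq_zero grpP2_mul_self,
    exp_smul_of_mul_self_eq_smul one_ne_zero hD diagonal_mul_grpD,
    exp_smul_of_mul_self_eq_smul (Real.sqrt_pos.2 hμ).ne' hJ (diagonal_mul_grpJ μ)]
  ext i j
  fin_cases i <;> fin_cases j <;>
    simp [grpC1, grpC2, grpP1, grpP2, grpD, grpJ, genC, genS, mul_apply, Fin.sum_univ_four] <;>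
    ring
end

section
/- In the quantum Poincaré algebra A over ℝ with relations [K, P₊] = (2/z) sinh(zP₊), [K, P₋] = -2P₋ cosh(zP₊), [P₊, P₋] = 0, the element f = K ⊗ sinh(zP₊) - sinh(zP₊) ⊗ K in A ⊗ A commutes with Δ(P₊) = 1 ⊗ P₊ + P₊ ⊗ 1. -/
open scoped TensorProduct

/-- In the non-standard quantum Poincaré algebra, with S playing the role of
sinh(zP₊) (so that [K,P₊] = (2/z)S and S commutes with P₊), the element
f = K ⊗ S - S ⊗ K commutes with Δ(P₊) = 1 ⊗ P₊ + P₊ ⊗ 1. -/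
theorem f_commutes_with_coproduct_Pplus
    (A : Type*) [Ring A] [Algebra ℝ A] (z : ℝ) (hz : z ≠ 0)
    (K Pp Pm S C : A)
    (hSP : S * Pp = Pp * S)
    (hKPp : K * Pp - Pp * K = (2 / z) • S)
    (hKPm : K * Pm - Pm * K = (-2 : ℝ) • (Pm * C))
    (hPP : Pp * Pm = Pm * Pp) :
    (K ⊗ₜ[ℝ] S - S ⊗ₜ[ℝ] K) * ((1 : A) ⊗ₜ[ℝ] Pp + Pp ⊗ₜ[ℝ] (1 : A))
      = ((1 : A) ⊗ₜ[ℝ] Pp + Pp ⊗ₜ[ℝ] (1 : A)) * (K ⊗ₜ[ℝ] S - S ⊗ₜ[ℝ] K) := by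
  have hKP' : K * Pp = Pp * K + (2 / z) • S := by
    have := hKPp; linear_combination (norm := module) this
  simp only [sub_mul, mul_sub, add_mul, mul_add, Algebra.TensorProduct.tmul_mul_tmul,
    one_mul, mul_one, hSP, hKP']
  simp only [TensorProduct.add_tmul, TensorProduct.tmul_add, TensorProduct.smul_tmul']
  rw [TensorProduct.smul_tmul]
  abel
end
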